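/- arXiv:1002.1142 — 6 statements merged into one kernel-verified Lean document; each statement's English description precedes it below -/
import Mathlib

section
/- Let n ≥ 2, let (A_i, 𝒜_i, μ_i), 1 ≤ i ≤ n, be σ-finite measure spaces, and for each i let M_i be a set of probability densities with respect to μ_i. Let δ_1,…,δ_n > 0, and suppose each M_i is covered by a finite family of N_i brackets, each of Hellinger diameter (with respect to μ_i) at most δ_i. Then the product model M = { s(x_1,…,x_n) = ∏_{i=1}^n s_i(x_i) : s_i ∈ M_i }, consisting of probability densities on ∏_{i=1}^n A_i with respect to the product measure ⊗_{i=1}^n μ_i, is covered by a finite family of at most ∏_{i=1}^n N_i brackets, each of Hellinger diameter at most ∏_{i=1}^n (1+δ_i) − 1. -/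
/-!
For `0 ≤ l ≤ u` the squared Hellinger distance is `∫ l + ∫ u - 2 ∫ √(l u)`, and by Fubini each of
these three integrals is multiplicative over product brackets. Once the brackets are normalized so
that `0 ≤ l` and `∫ l ≤ 1`, the theorem reduces to an inequality between triples `(A, B, C)`,
constrained by `A ≤ 1`, `A ≤ C ≤ B`, `C² ≤ A B` (Cauchy–Schwarz) and `A + B - 2C ≤ (q - 1)²`.
These constraints are stable under multiplication thanks to the identity
`A A' + B B' - 2 C C' = (A + B - 2C) B' + A (A' + B' - 2C') + 2 (C - A)(B' - C')`,
in which `C - A ≤ q - 1`, `B' ≤ q'²` and `B' - C' ≤ q' (q' - 1)` follow from Cauchy–Schwarz.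
-/
open MeasureTheory Real BigOperators

noncomputable section

/-- Hellinger distance between two nonnegative functions with respect to a
measure `μ`. -/
def hellM {α : Type*} [MeasurableSpace α] (μ : Measure α) (s t : α → ℝ) : ℝ :=
  Real.sqrt (∫ a, (Real.sqrt (s a) - Real.sqrt (t a)) ^ 2 ∂μ)

/-- `M` is covered by `N` brackets, each of Hellinger diameter at most `ε`. -/
def IsBracketCover {α : Type*} [MeasurableSpace α] (μ : Measure α)
    (M : Set (α → ℝ)) (N : ℕ) (ε : ℝ) : Prop :=
  ∃ lo up : Fin N → α → ℝ,
    (∀ i, Measurable (lo i) ∧ Measurable (up i) ∧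
      Integrable (lo i) μ ∧ Integrable (up i) μ ∧ hellM μ (lo i) (up i) ≤ ε) ∧
    ∀ s ∈ M, ∃ i, ∀ a, lo i a ≤ s a ∧ s a ≤ up i a

/-- The moments `(∫ l, ∫ u, ∫ √(l u))` of a bracket `[l, u]` with `0 ≤ l`, `∫ l ≤ 1` and Hellinger
diameter at most `q - 1`. -/
structure IsBracketMoments (A B C q : ℝ) : Prop where
  nonneg : 0 ≤ A
  le_one : A ≤ 1
  le_mid : A ≤ C
  mid_le : C ≤ B
  sq_mid_le : C ^ 2 ≤ A * B
  one_le : 1 ≤ q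
  sub_le : A + B - 2 * C ≤ (q - 1) ^ 2

namespace IsBracketMoments

variable {A B C q A' B' C' q' : ℝ}

theorem one : IsBracketMoments 1 1 1 1 :=
  ⟨zero_le_one, le_rfl, le_rfl, le_rfl, by norm_num, le_rfl, by norm_num⟩

theorem sub_nonneg (h : IsBracketMoments A B C q) : 0 ≤ A + B - 2 * C := by
  nlinarith [h.sq_mid_le, h.nonneg, h.le_mid, h.mid_le, sq_nonneg (A - B)]

theorem mid_sub_le (h : IsBracketMoments A B C q) : C - A ≤ q - 1 := by
  have key : (C - A) ^ 2 ≤ (q - 1) ^ 2 :=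
    calc (C - A) ^ 2 ≤ A * (A + B - 2 * C) := by nlinarith [h.sq_mid_le]
      _ ≤ 1 * (q - 1) ^ 2 := mul_le_mul h.le_one h.sub_le h.sub_nonneg zero_le_one
      _ = (q - 1) ^ 2 := one_mul _
  exact (abs_le_of_sq_le_sq' key (by linarith [h.one_le])).2

theorem le_sq (h : IsBracketMoments A B C q) : B ≤ q ^ 2 := by
  nlinarith [h.mid_sub_le, h.sub_le, h.le_one]

theorem sub_mid_le (h : IsBracketMoments A B C q) : B - C ≤ q * (q - 1) := by
  have hq : 0 ≤ q - 1 := by linarith [h.one_le]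
  have key : (B - C) ^ 2 ≤ (q * (q - 1)) ^ 2 :=
    calc (B - C) ^ 2 ≤ B * (A + B - 2 * C) := by nlinarith [h.sq_mid_le]
      _ ≤ q ^ 2 * (q - 1) ^ 2 := mul_le_mul h.le_sq h.sub_le h.sub_nonneg (sq_nonneg q)
      _ = (q * (q - 1)) ^ 2 := by ring
  exact (abs_le_of_sq_le_sq' key (by nlinarith [h.one_le])).2

theorem mul (h : IsBracketMoments A B C q) (h' : IsBracketMoments A' B' C' q') :
    IsBracketMoments (A * A') (B * B') (C * C') (q * q') := by
  have hC := h.nonneg.trans h.le_mid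
  have hC' := h'.nonneg.trans h'.le_mid
  refine ⟨mul_nonneg h.nonneg h'.nonneg, mul_le_one₀ h.le_one h'.nonneg h'.le_one,
    mul_le_mul h.le_mid h'.le_mid h'.nonneg hC,
    mul_le_mul h.mid_le h'.mid_le hC' (hC.trans h.mid_le), ?_, one_le_mul_of_one_le_of_one_le h.one_le h'.one_le, ?_⟩
  · calc (C * C') ^ 2 = C ^ 2 * C' ^ 2 := mul_pow _ _ _
      _ ≤ (A * B) * (A' * B') := mul_le_mul h.sq_mid_le h'.sq_mid_le (sq_nonneg _)
          (mul_nonneg h.nonneg (hC.trans h.mid_le))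
      _ = A * A' * (B * B') := by ring
  · have t₁ : (A + B - 2 * C) * B' ≤ (q - 1) ^ 2 * q' ^ 2 :=
      mul_le_mul h.sub_le h'.le_sq (hC'.trans h'.mid_le) (sq_nonneg _)
    have t₂ : A * (A' + B' - 2 * C') ≤ 1 * (q' - 1) ^ 2 :=
      mul_le_mul h.le_one h'.sub_le h'.sub_nonneg zero_le_one
    have t₃ : (C - A) * (B' - C') ≤ (q - 1) * (q' * (q' - 1)) :=
      mul_le_mul h.mid_sub_le h'.sub_mid_le (by linarith [h'.mid_le]) (by linarith [h.one_le])
    calc A * A' + B * B' - 2 * (C * C')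
        = (A + B - 2 * C) * B' + A * (A' + B' - 2 * C') + 2 * ((C - A) * (B' - C')) := by ring
      _ ≤ (q - 1) ^ 2 * q' ^ 2 + 1 * (q' - 1) ^ 2 + 2 * ((q - 1) * (q' * (q' - 1))) := by
          linarith
      _ = (q * q' - 1) ^ 2 := by ring

theorem prod {ι : Type*} (s : Finset ι) {A B C q : ι → ℝ}
    (h : ∀ i ∈ s, IsBracketMoments (A i) (B i) (C i) (q i)) :
    IsBracketMoments (∏ i ∈ s, A i) (∏ i ∈ s, B i) (∏ i ∈ s, C i) (∏ i ∈ s, q i) := by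
  induction s using Finset.cons_induction with
  | empty => simpa using one
  | cons a s ha ih =>
    simp only [Finset.prod_cons]
    exact (h a (s.mem_cons_self a)).mul (ih fun i hi => h i (Finset.mem_cons_of_mem hi))

end IsBracketMoments

section Hellinger

variable {α : Type*} [MeasurableSpace α] {μ : Measure α} {l u : α → ℝ}

theorem integrable_sqrt_mul_sqrt (hl0 : 0 ≤ l) (hu0 : 0 ≤ u) (hl : Integrable l μ)
    (hu : Integrable u μ) : Integrable (fun a => √(l a) * √(u a)) μ := by
  refine (hl.add hu).mono' ?_ (Filter.Eventually.of_forall fun a => ?_)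
  · exact (continuous_sqrt.comp_aestronglyMeasurable hl.1).mul
      (continuous_sqrt.comp_aestronglyMeasurable hu.1)
  · rw [norm_of_nonneg (by positivity), Pi.add_apply]
    nlinarith [sq_nonneg (√(l a) - √(u a)), sq_sqrt (hl0 a), sq_sqrt (hu0 a)]

theorem integral_sqrt_sub_sqrt_sq (hl0 : 0 ≤ l) (hu0 : 0 ≤ u) (hl : Integrable l μ)
    (hu : Integrable u μ) :
    ∫ a, (√(l a) - √(u a)) ^ 2 ∂μ = ∫ a, l a ∂μ + ∫ a, u a ∂μ - 2 * ∫ a, √(l a) * √(u a) ∂μ := by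
  have hpt : ∀ a, (√(l a) - √(u a)) ^ 2 = l a + u a - 2 * (√(l a) * √(u a)) := fun a => by
    rw [sub_sq, sq_sqrt (hl0 a), sq_sqrt (hu0 a)]; ring
  simp_rw [hpt]
  rw [integral_sub (f := fun a => l a + u a) (hl.add hu)
      ((integrable_sqrt_mul_sqrt hl0 hu0 hl hu).const_mul 2),
    integral_add hl hu, integral_const_mul]

theorem sq_integral_sqrt_mul_sqrt_le (hl0 : 0 ≤ l) (hu0 : 0 ≤ u) (hl : Integrable l μ)
    (hu : Integrable u μ) :
    (∫ a, √(l a) * √(u a) ∂μ) ^ 2 ≤ (∫ a, l a ∂μ) * ∫ a, u a ∂μ := by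
  have hmemLp : ∀ {f : α → ℝ}, 0 ≤ f → Integrable f μ →
      MemLp (fun a => √(f a)) (ENNReal.ofReal 2) μ := fun {f} hf0 hf => by
    rw [ENNReal.ofReal_ofNat, memLp_two_iff_integrable_sq
      (continuous_sqrt.comp_aestronglyMeasurable hf.1)]
    simpa only [sq_sqrt (hf0 _)] using hf
  have holder := integral_mul_le_Lp_mul_Lq_of_nonneg Real.HolderConjugate.two_two
    (Filter.Eventually.of_forall fun a => sqrt_nonneg (l a))
    (Filter.Eventually.of_forall fun a => sqrt_nonneg (u a)) (hmemLp hl0 hl) (hmemLp hu0 hu)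
  simp only [rpow_two, sq_sqrt (hl0 _), sq_sqrt (hu0 _), ← sqrt_eq_rpow] at holder
  calc (∫ a, √(l a) * √(u a) ∂μ) ^ 2 ≤ (√(∫ a, l a ∂μ) * √(∫ a, u a ∂μ)) ^ 2 :=
        pow_le_pow_left₀ (integral_nonneg fun a => by positivity) holder 2
    _ = (∫ a, l a ∂μ) * ∫ a, u a ∂μ := by
        rw [mul_pow, sq_sqrt (integral_nonneg hl0), sq_sqrt (integral_nonneg hu0)]

end Hellinger

section DensityBracket

variable {α : Type*} [MeasurableSpace α] {μ : Measure α}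

structure IsDensityBracket (μ : Measure α) (l u : α → ℝ) (δ : ℝ) : Prop where
  measurable_lower : Measurable l
  measurable_upper : Measurable u
  integrable_lower : Integrable l μ
  integrable_upper : Integrable u μ
  nonneg : 0 ≤ l
  le : l ≤ u
  integral_le_one : ∫ a, l a ∂μ ≤ 1
  hellM_le : hellM μ l u ≤ δ

theorem isDensityBracket_zero {δ : ℝ} (hδ : 0 ≤ δ) : IsDensityBracket μ 0 0 δ :=
  ⟨measurable_const, measurable_const, integrable_zero _ _ _, integrable_zero _ _ _, le_rfl,
    le_rfl, by simp, by simpa [hellM] using hδ⟩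

theorem Real.sqrt_max_zero (x : ℝ) : √(max x 0) = √x := by
  rcases le_total x 0 with hx | hx
  · rw [max_eq_right hx, sqrt_zero, sqrt_eq_zero'.2 hx]
  · rw [max_eq_left hx]

theorem isDensityBracket_max_zero {lo up s : α → ℝ} {δ : ℝ} (hlo : Measurable lo)
    (hup : Measurable up) (hloi : Integrable lo μ) (hupi : Integrable up μ)
    (hδ : hellM μ lo up ≤ δ) (hs0 : 0 ≤ s) (hs1 : ∫ a, s a ∂μ = 1) (hlos : lo ≤ s)
    (hsup : s ≤ up) :
    IsDensityBracket μ (fun a => max (lo a) 0) (fun a => max (up a) 0) δ := by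
  refine ⟨hlo.max measurable_const, hup.max measurable_const, hloi.pos_part, hupi.pos_part,
    fun a => le_max_right _ _, fun a => max_le_max_right 0 ((hlos a).trans (hsup a)), ?_, ?_⟩
  · calc ∫ a, max (lo a) 0 ∂μ ≤ ∫ a, s a ∂μ :=
          integral_mono_of_nonneg (Filter.Eventually.of_forall fun a => le_max_right _ _)
            (Integrable.of_integral_ne_zero (by rw [hs1]; exact one_ne_zero))
            (Filter.Eventually.of_forall fun a => max_le (hlos a) (hs0 a))
      _ = 1 := hs1
  · simpa only [hellM, sqrt_max_zero] using hδ

/-- Brackets containing a density are truncated at `0`; the others are replaced by `[0, 0]`. -/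
theorem IsBracketCover.exists_isDensityBracket {M : Set (α → ℝ)} {N : ℕ} {δ : ℝ}
    (h : IsBracketCover μ M N δ) (hM : ∀ s ∈ M, 0 ≤ s ∧ ∫ a, s a ∂μ = 1) :
    ∃ l u : Fin N → α → ℝ,
      (∀ j, IsDensityBracket μ (l j) (u j) δ) ∧ ∀ s ∈ M, ∃ j, l j ≤ s ∧ s ≤ u j := by
  classical
  obtain ⟨lo, up, hbr, hcov⟩ := h
  let Meets (j : Fin N) : Prop := ∃ s ∈ M, lo j ≤ s ∧ s ≤ up j
  refine ⟨fun j => if Meets j then fun a => max (lo j a) 0 else 0,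
    fun j => if Meets j then fun a => max (up j a) 0 else 0, fun j => ?_, fun s hs => ?_⟩
  · obtain ⟨hlo, hup, hloi, hupi, hδ⟩ := hbr j
    dsimp only
    split_ifs with hj
    · obtain ⟨s, hs, hlos, hsup⟩ := hj
      exact isDensityBracket_max_zero hlo hup hloi hupi hδ (hM s hs).1 (hM s hs).2 hlos hsup
    · exact isDensityBracket_zero ((sqrt_nonneg _).trans hδ)
  · obtain ⟨j, hj⟩ := hcov s hs
    have hmeets : Meets j := ⟨s, hs, fun a => (hj a).1, fun a => (hj a).2⟩
    refine ⟨j, ?_, ?_⟩ <;> simp only [hmeets, if_true] <;> intro a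
    · exact max_le (hj a).1 ((hM s hs).1 a)
    · exact (hj a).2.trans (le_max_left _ _)

theorem IsDensityBracket.isBracketMoments {l u : α → ℝ} {δ : ℝ}
    (h : IsDensityBracket μ l u δ) :
    IsBracketMoments (∫ a, l a ∂μ) (∫ a, u a ∂μ) (∫ a, √(l a) * √(u a) ∂μ) (1 + δ) := by
  have hu0 : 0 ≤ u := h.nonneg.trans h.le
  have hlu := integrable_sqrt_mul_sqrt h.nonneg hu0 h.integrable_lower h.integrable_upper
  refine ⟨integral_nonneg h.nonneg, h.integral_le_one, ?_, ?_,
    sq_integral_sqrt_mul_sqrt_le h.nonneg hu0 h.integrable_lower h.integrable_upper,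
    by linarith [(sqrt_nonneg _).trans h.hellM_le], ?_⟩
  · refine integral_mono h.integrable_lower hlu fun a => ?_
    calc l a = √(l a) * √(l a) := (mul_self_sqrt (h.nonneg a)).symm
      _ ≤ √(l a) * √(u a) := by gcongr; exact h.le a
  · refine integral_mono hlu h.integrable_upper fun a => ?_
    calc √(l a) * √(u a) ≤ √(u a) * √(u a) := by gcongr; exact h.le a
      _ = u a := mul_self_sqrt (hu0 a)
  · rw [← integral_sqrt_sub_sqrt_sq h.nonneg hu0 h.integrable_lower h.integrable_upper,
      add_sub_cancel_left, ← sq_sqrt (integral_nonneg fun a => sq_nonneg _)]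
    exact pow_le_pow_left₀ (sqrt_nonneg _) h.hellM_le 2

end DensityBracket

theorem IsDensityBracket.pi {ι : Type*} [Fintype ι] {α : ι → Type*} [∀ i, MeasurableSpace (α i)]
    {μ : ∀ i, Measure (α i)} [∀ i, SigmaFinite (μ i)] {l u : ∀ i, α i → ℝ} {δ : ι → ℝ}
    (h : ∀ i, IsDensityBracket (μ i) (l i) (u i) (δ i)) :
    IsDensityBracket (Measure.pi μ) (fun x => ∏ i, l i (x i)) (fun x => ∏ i, u i (x i))
      (∏ i, (1 + δ i) - 1) := by
  have hl0 : ∀ i a, 0 ≤ l i a := fun i => (h i).nonneg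
  have hu0 : ∀ i a, 0 ≤ u i a := fun i a => (hl0 i a).trans ((h i).le a)
  have hL0 : 0 ≤ fun x : ∀ i, α i => ∏ i, l i (x i) := fun x =>
    Finset.prod_nonneg fun i _ => hl0 i (x i)
  have hLU : (fun x : ∀ i, α i => ∏ i, l i (x i)) ≤ fun x => ∏ i, u i (x i) := fun x =>
    Finset.prod_le_prod (fun i _ => hl0 i (x i)) fun i _ => (h i).le (x i)
  have hLi := Integrable.fintype_prod_dep fun i => (h i).integrable_lower
  have hUi := Integrable.fintype_prod_dep fun i => (h i).integrable_upper
  have hmoments := IsBracketMoments.prod Finset.univ fun i _ => (h i).isBracketMoments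
  refine ⟨Finset.measurable_prod _ fun i _ => (h i).measurable_lower.comp (measurable_pi_apply i),
    Finset.measurable_prod _ fun i _ => (h i).measurable_upper.comp (measurable_pi_apply i),
    hLi, hUi, hL0, hLU, ?_, ?_⟩
  · rw [integral_fintype_prod_eq_prod]
    exact hmoments.le_one
  · have hmid : ∫ x, √(∏ i, l i (x i)) * √(∏ i, u i (x i)) ∂Measure.pi μ
        = ∏ i, ∫ a, √(l i a) * √(u i a) ∂μ i := by
      rw [← integral_fintype_prod_eq_prod]
      congr 1 with x
      rw [sqrt_prod _ fun i _ => hl0 i (x i), sqrt_prod _ fun i _ => hu0 i (x i),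
        Finset.prod_mul_distrib]
    have hq : 0 ≤ ∏ i, (1 + δ i) - 1 := by linarith [hmoments.one_le]
    rw [hellM, integral_sqrt_sub_sqrt_sq hL0 (hL0.trans hLU) hLi hUi, hmid,
      integral_fintype_prod_eq_prod, integral_fintype_prod_eq_prod]
    exact (sqrt_le_sqrt hmoments.sub_le).trans_eq (sqrt_sq hq)

theorem bracket_cover_product_general (n : ℕ)
    (α : Fin n → Type*) [∀ i, MeasurableSpace (α i)]
    (μ : ∀ i, Measure (α i)) [∀ i, SigmaFinite (μ i)]
    (M : ∀ i, Set (α i → ℝ))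
    (hM : ∀ i, ∀ s ∈ M i,
      Measurable s ∧ (∀ a, 0 ≤ s a) ∧ Integrable s (μ i) ∧ ∫ a, s a ∂(μ i) = 1)
    (δ : Fin n → ℝ) (N : Fin n → ℕ)
    (hcov : ∀ i, IsBracketCover (μ i) (M i) (N i) (δ i)) :
    ∃ N' ≤ ∏ i, N i,
      IsBracketCover (Measure.pi μ)
        {s : (∀ i, α i) → ℝ | ∃ f : ∀ i, α i → ℝ,
          (∀ i, f i ∈ M i) ∧ ∀ x, s x = ∏ i, f i (x i)}
        N' (∏ i, (1 + δ i) - 1) := by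
  choose l u hlu hcover using fun i => (hcov i).exists_isDensityBracket
    fun s hs => ⟨(hM i s hs).2.1, (hM i s hs).2.2.2⟩
  let e : (∀ i, Fin (N i)) ≃ Fin (∏ i, N i) := Fintype.equivFinOfCardEq (by simp)
  refine ⟨_, le_rfl, fun k x => ∏ i, l i (e.symm k i) (x i), fun k x => ∏ i, u i (e.symm k i) (x i),
    fun k => ?_, ?_⟩
  · have hk := IsDensityBracket.pi fun i => hlu i (e.symm k i)
    exact ⟨hk.measurable_lower, hk.measurable_upper, hk.integrable_lower, hk.integrable_upper,
      hk.hellM_le⟩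
  · rintro s ⟨f, hf, hs⟩
    choose j hj using fun i => hcover i (f i) (hf i)
    refine ⟨e j, fun x => ?_⟩
    simp only [e.symm_apply_apply, hs x]
    exact ⟨Finset.prod_le_prod (fun i _ => (hlu i (j i)).nonneg (x i)) fun i _ => (hj i).1 (x i),
      Finset.prod_le_prod (fun i _ => (hM i (f i) (hf i)).2.1 (x i)) fun i _ => (hj i).2 (x i)⟩

/-- **Lemma 2: bracketing entropy of product densities.** -/
theorem bracket_cover_product (n : ℕ) (hn : 2 ≤ n)
    (α : Fin n → Type*) [∀ i, MeasurableSpace (α i)]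
    (μ : ∀ i, Measure (α i)) [∀ i, SigmaFinite (μ i)]
    (M : ∀ i, Set (α i → ℝ))
    (hM : ∀ i, ∀ s ∈ M i,
      Measurable s ∧ (∀ a, 0 ≤ s a) ∧ Integrable s (μ i) ∧ ∫ a, s a ∂(μ i) = 1)
    (δ : Fin n → ℝ) (hδ : ∀ i, 0 < δ i) (N : Fin n → ℕ)
    (hcov : ∀ i, IsBracketCover (μ i) (M i) (N i) (δ i)) :
    ∃ N' ≤ ∏ i, N i,
      IsBracketCover (Measure.pi μ)
        {s : (∀ i, α i) → ℝ | ∃ f : ∀ i, α i → ℝ,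
          (∀ i, f i ∈ M i) ∧ ∀ x, s x = ∏ i, f i (x i)}
        N' (∏ i, (1 + δ i) - 1) :=
  bracket_cover_product_general n α μ M hM δ N hcov

end
end

section
/- Let n ≥ 2 be an integer and identify each element of the simplex 𝕊_{n−1} with a probability density on {1,…,n} with respect to counting measure. Then for every 0 < δ ≤ 1, 𝕊_{n−1} can be covered by a finite family of brackets, each of Hellinger diameter at most δ, whose cardinality N satisfies ln N ≤ (n−1)·ln(1/δ) + (ln 2 + ln(n+1) + n·ln(2πe))/2. -/
/-
Cover the simplex by the brackets `[(k ε)², ((k + 1) ε)²]` (coordinatewise), `k ∈ ℕⁿ`,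
`ε = δ / √n`: each has Hellinger diameter `√n ε = δ`, and `p` lies in the one with
`kᵢ = ⌊√pᵢ / ε⌋`. As `√p` is a unit vector, only the `k` with `‖k‖ ≤ 1/ε ≤ ‖k + 1‖` are needed.
For such `k` the set `{x : ⌊|xᵢ|⌋ = kᵢ ∀ i}` has volume `2ⁿ` and lies in the annulus of radii
`1/ε ± √n`; these sets are disjoint, so comparing volumes, with `(1+δ)ⁿ - (1-δ)ⁿ ≤ 2ⁿ δ` and
`Γ(n/2 + 1) ≥ (n/2e)^(n/2)`, bounds the number of brackets by `(2πe)^(n/2) δ^(1-n)`.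
-/

open Real BigOperators

noncomputable section

def hellF {𝒳 : Type*} [Fintype 𝒳] (p q : 𝒳 → ℝ) : ℝ :=
  Real.sqrt (∑ x, (Real.sqrt (p x) - Real.sqrt (q x)) ^ 2)

open Finset Fintype MeasureTheory Metric

lemma one_add_pow_sub_one_sub_pow_le {δ : ℝ} (h0 : 0 ≤ δ) (h1 : δ ≤ 1) {n : ℕ} (hn : 1 ≤ n) :
    (1 + δ) ^ n - (1 - δ) ^ n ≤ 2 ^ n * δ := by
  suffices (1 + δ) ^ n - (1 - δ) ^ n ≤ 2 ^ n * δ ∧ (1 + δ) ^ n + (1 - δ) ^ n ≤ 2 ^ n from this.1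
  induction n, hn using Nat.le_induction with
  | base => constructor <;> linarith
  | succ n _ ih =>
    have h2n : (0 : ℝ) < 2 ^ n := by positivity
    have hδδ : δ * δ ≤ 1 := mul_le_one₀ h1 h0 h1
    constructor
    · have e : (1 + δ) ^ (n + 1) - (1 - δ) ^ (n + 1)
          = ((1 + δ) ^ n - (1 - δ) ^ n) + δ * ((1 + δ) ^ n + (1 - δ) ^ n) := by ring
      rw [e, pow_succ]
      nlinarith [mul_le_mul_of_nonneg_left ih.2 h0]
    · have e : (1 + δ) ^ (n + 1) + (1 - δ) ^ (n + 1)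
          = ((1 + δ) ^ n + (1 - δ) ^ n) + δ * ((1 + δ) ^ n - (1 - δ) ^ n) := by ring
      rw [e, pow_succ]
      nlinarith [mul_le_mul_of_nonneg_left ih.1 h0]

lemma one_add_inv_rpow_le_exp_one {x : ℝ} (hx : 0 < x) : (1 + x⁻¹) ^ x ≤ exp 1 := by
  calc (1 + x⁻¹) ^ x ≤ exp x⁻¹ ^ x := by
        gcongr
        linarith [add_one_le_exp x⁻¹]
    _ = exp 1 := by rw [← exp_mul, inv_mul_cancel₀ hx.ne']

lemma div_exp_rpow_le_Gamma_add_two {x : ℝ} (hx : 0 < x)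
    (h : (x / exp 1) ^ x ≤ Gamma (x + 1)) :
    ((x + 1) / exp 1) ^ (x + 1) ≤ Gamma (x + 1 + 1) := by
  have hsplit : (x + 1) / exp 1 = x / exp 1 * (1 + x⁻¹) := by field_simp
  calc ((x + 1) / exp 1) ^ (x + 1) = (x / exp 1) ^ x * (1 + x⁻¹) ^ x * ((x + 1) / exp 1) := by
        rw [rpow_add_one (by positivity), hsplit, mul_rpow (by positivity) (by positivity)]
    _ ≤ Gamma (x + 1) * exp 1 * ((x + 1) / exp 1) := by
        gcongr
        exact one_add_inv_rpow_le_exp_one hx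
    _ = Gamma (x + 1 + 1) := by
        rw [Gamma_add_one (by positivity : x + 1 ≠ 0)]
        field_simp

theorem half_div_exp_rpow_le_Gamma : ∀ n : ℕ, 1 ≤ n →
    ((n / 2 : ℝ) / exp 1) ^ (n / 2 : ℝ) ≤ Gamma (n / 2 + 1)
  | 1, _ => by
    rw [Nat.cast_one, Gamma_add_one one_half_pos.ne', Gamma_one_half_eq, ← sqrt_eq_rpow,
      sqrt_le_iff]
    refine ⟨by positivity, ?_⟩
    rw [mul_pow, sq_sqrt pi_pos.le, div_div, div_le_iff₀ (by positivity)]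
    nlinarith [pi_gt_three, exp_one_gt_d9]
  | 2, _ => by norm_num [Gamma_two, inv_le_one₀ (exp_pos 1)]
  | n + 3, _ => by
    have hcast : ((n + 3 : ℕ) : ℝ) / 2 = (n + 1 : ℕ) / 2 + 1 := by push_cast; ring
    rw [hcast]
    exact div_exp_rpow_le_Gamma_add_two (by positivity)
      (half_div_exp_rpow_le_Gamma (n + 1) (by omega))

lemma mem_Icc_sq_floor_sqrt_div_mul {t ε : ℝ} (ht : 0 ≤ t) (hε : 0 < ε) :
    t ∈ Set.Icc (((⌊√t / ε⌋₊ : ℝ) * ε) ^ 2) (((⌊√t / ε⌋₊ + 1 : ℝ) * ε) ^ 2) := by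
  have hlo : (⌊√t / ε⌋₊ : ℝ) * ε ≤ √t := (le_div_iff₀ hε).mp (Nat.floor_le (by positivity))
  have hup : √t ≤ (⌊√t / ε⌋₊ + 1 : ℝ) * ε := (div_le_iff₀ hε).mp (Nat.lt_floor_add_one _).le
  exact ⟨(le_sqrt (by positivity) ht).mp hlo, (sqrt_le_left (by positivity)).mp hup⟩

lemma Real.setOf_floor_abs_eq (m : ℕ) :
    {t : ℝ | ⌊|t|⌋₊ = m} = ball 0 (m + 1) \ ball 0 m := by
  ext t
  simp [Nat.floor_eq_iff (abs_nonneg t), and_comm]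

lemma Real.volume_setOf_floor_abs_eq (m : ℕ) : volume {t : ℝ | ⌊|t|⌋₊ = m} = 2 := by
  rw [Real.setOf_floor_abs_eq, measure_sdiff (ball_subset_ball (by linarith))
    measurableSet_ball.nullMeasurableSet measure_ball_lt_top.ne, Real.volume_ball,
    Real.volume_ball, ← ENNReal.ofReal_sub _ (by positivity)]
  norm_num [mul_add]

lemma Real.measurableSet_setOf_floor_abs_eq (m : ℕ) : MeasurableSet {t : ℝ | ⌊|t|⌋₊ = m} := by
  rw [Real.setOf_floor_abs_eq]
  exact measurableSet_ball.diff measurableSet_ball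

section

variable {ι : Type*}

def absFloorCell (k : ι → ℕ) : Set (EuclideanSpace ℝ ι) := {x | ∀ i, ⌊|x i|⌋₊ = k i}

lemma absFloorCell_eq_preimage (k : ι → ℕ) :
    absFloorCell k = WithLp.ofLp ⁻¹' Set.univ.pi fun i => {t : ℝ | ⌊|t|⌋₊ = k i} := by
  ext x
  simp [absFloorCell]

lemma pairwise_disjoint_absFloorCell :
    Pairwise fun k k' : ι → ℕ => Disjoint (absFloorCell k) (absFloorCell k') := by
  intro k k' hne
  refine Set.disjoint_left.mpr fun x hx hx' => hne (funext fun i => ?_)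
  rw [← hx i, hx' i]

variable [Fintype ι]

lemma measurableSet_absFloorCell (k : ι → ℕ) : MeasurableSet (absFloorCell k) := by
  rw [absFloorCell_eq_preimage]
  exact (PiLp.volume_preserving_ofLp ι).measurable
    (.univ_pi fun i => Real.measurableSet_setOf_floor_abs_eq (k i))

lemma volume_absFloorCell (k : ι → ℕ) : volume (absFloorCell k) = 2 ^ card ι := by
  rw [absFloorCell_eq_preimage, (PiLp.volume_preserving_ofLp ι).measure_preimage
    (MeasurableSet.univ_pi fun i => Real.measurableSet_setOf_floor_abs_eq (k i)).nullMeasurableSet,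
    volume_pi_pi]
  simp [Real.volume_setOf_floor_abs_eq]

lemma EuclideanSpace.norm_le_norm_of_abs_le {x y : EuclideanSpace ℝ ι} (h : ∀ i, |x i| ≤ |y i|) :
    ‖x‖ ≤ ‖y‖ := by
  simp only [EuclideanSpace.norm_eq]
  gcongr with i
  exact h i

lemma EuclideanSpace.norm_toLp (f : ι → ℝ) : ‖WithLp.toLp 2 f‖ = √(∑ i, f i ^ 2) := by
  simp [EuclideanSpace.norm_eq]

lemma EuclideanSpace.volume_closedBall_diff_ball [Nonempty ι] (x : EuclideanSpace ℝ ι)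
    {r R : ℝ} (hr : 0 ≤ r) (hrR : r ≤ R) :
    volume (closedBall x R \ ball x r) = ENNReal.ofReal ((R ^ card ι - r ^ card ι)
      * (√π ^ card ι / Gamma (card ι / 2 + 1))) := by
  have hR : 0 ≤ R := hr.trans hrR
  rw [measure_sdiff (ball_subset_closedBall.trans (closedBall_subset_closedBall hrR))
    measurableSet_ball.nullMeasurableSet measure_ball_lt_top.ne, EuclideanSpace.volume_closedBall,
    EuclideanSpace.volume_ball, ← ENNReal.ofReal_pow hr, ← ENNReal.ofReal_pow hR,
    ← ENNReal.ofReal_mul (pow_nonneg hR _), ← ENNReal.ofReal_mul (pow_nonneg hr _),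
    ← ENNReal.ofReal_sub _ (by positivity), sub_mul]

lemma hellF_sq_natCast_mul_sq_natCast_add_one_mul {ε : ℝ} (hε : 0 ≤ ε) (k : ι → ℕ) :
    hellF (fun i => ((k i : ℝ) * ε) ^ 2) (fun i => ((k i + 1 : ℝ) * ε) ^ 2) = √(card ι) * ε := by
  have hterm (i : ι) : (√(((k i : ℝ) * ε) ^ 2) - √(((k i + 1 : ℝ) * ε) ^ 2)) ^ 2 = ε ^ 2 := by
    rw [sqrt_sq (by positivity), sqrt_sq (by positivity)]
    ring
  simp only [hellF, hterm, sum_const, card_univ, nsmul_eq_mul]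
  rw [sqrt_mul (Nat.cast_nonneg _), sqrt_sq hε]

def latticeShell (ι : Type*) [Fintype ι] [DecidableEq ι] (M : ℝ) : Finset (ι → ℕ) :=
  {k ∈ Fintype.piFinset fun _ => range (⌊M⌋₊ + 1) |
    ∑ i, (k i : ℝ) ^ 2 ≤ M ^ 2 ∧ M ^ 2 ≤ ∑ i, ((k i : ℝ) + 1) ^ 2}

variable [DecidableEq ι]

lemma mem_latticeShell {M : ℝ} (hM : 0 ≤ M) {k : ι → ℕ} :
    k ∈ latticeShell ι M ↔ ∑ i, (k i : ℝ) ^ 2 ≤ M ^ 2 ∧ M ^ 2 ≤ ∑ i, ((k i : ℝ) + 1) ^ 2 := by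
  simp only [latticeShell, mem_filter, Fintype.mem_piFinset, mem_range, Nat.lt_succ_iff,
    and_iff_right_iff_imp]
  intro hk i
  refine Nat.le_floor (abs_le_of_sq_le_sq' ?_ hM).2
  exact (single_le_sum (fun j _ => sq_nonneg (k j : ℝ)) (mem_univ i)).trans hk.1

lemma absFloorCell_subset_annulus {M : ℝ} (hM : 0 ≤ M) {k : ι → ℕ} (hk : k ∈ latticeShell ι M) :
    absFloorCell k ⊆ closedBall 0 (M + √(card ι)) \ ball 0 (M - √(card ι)) := by
  intro x hx
  rw [mem_latticeShell hM] at hk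
  set u : EuclideanSpace ℝ ι := WithLp.toLp 2 fun i => (k i : ℝ)
  set v : EuclideanSpace ℝ ι := WithLp.toLp 2 fun _ => 1
  have hbounds (i : ι) : (k i : ℝ) ≤ |x i| ∧ |x i| ≤ k i + 1 := by
    have := Nat.floor_eq_iff (abs_nonneg (x i)) |>.mp (hx i)
    exact ⟨this.1, this.2.le⟩
  have hu : ‖u‖ ≤ M := by
    rw [EuclideanSpace.norm_toLp, sqrt_le_left hM]
    exact hk.1
  have huv : M ≤ ‖u + v‖ := by
    rw [← WithLp.toLp_add, EuclideanSpace.norm_toLp]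
    simp only [Pi.add_apply]
    exact (le_sqrt hM (by positivity)).2 hk.2
  have hv : ‖v‖ = √(card ι) := by simp [v, EuclideanSpace.norm_toLp]
  have hux : ‖u‖ ≤ ‖x‖ := EuclideanSpace.norm_le_norm_of_abs_le fun i => by
    simpa [u] using (hbounds i).1
  have hxuv : ‖x‖ ≤ ‖u + v‖ := EuclideanSpace.norm_le_norm_of_abs_le fun i => by
    simpa [u, v, abs_of_nonneg (by positivity : (0 : ℝ) ≤ k i + 1)] using (hbounds i).2
  have htri : ‖u + v‖ ≤ ‖u‖ + ‖v‖ := norm_add_le u v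
  simp only [Set.mem_sdiff, mem_closedBall, mem_ball, dist_zero_right, not_lt]
  constructor <;> linarith

theorem card_latticeShell_mul_two_pow_le [Nonempty ι] {M : ℝ} (hM : √(card ι) ≤ M) :
    (#(latticeShell ι M) : ℝ) * 2 ^ card ι ≤
      ((M + √(card ι)) ^ card ι - (M - √(card ι)) ^ card ι)
        * (√π ^ card ι / Gamma (card ι / 2 + 1)) := by
  have hM0 : 0 ≤ M := (sqrt_nonneg _).trans hM
  have hr : 0 ≤ M - √(card ι) := sub_nonneg.mpr hM
  have hrR : M - √(card ι) ≤ M + √(card ι) := by linarith [sqrt_nonneg (card ι : ℝ)]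
  have hvol : volume (⋃ k ∈ latticeShell ι M, absFloorCell k) ≤
      volume (closedBall (0 : EuclideanSpace ℝ ι) (M + √(card ι)) \ ball 0 (M - √(card ι))) :=
    measure_mono (Set.iUnion₂_subset fun k hk => absFloorCell_subset_annulus hM0 hk)
  rw [measure_biUnion_finset (pairwise_disjoint_absFloorCell.set_pairwise _)
      (fun k _ => measurableSet_absFloorCell k),
    EuclideanSpace.volume_closedBall_diff_ball _ hr hrR] at hvol
  simp only [volume_absFloorCell, sum_const, nsmul_eq_mul] at hvol
  have hpos : 0 ≤ ((M + √(card ι)) ^ card ι - (M - √(card ι)) ^ card ι)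
      * (√π ^ card ι / Gamma (card ι / 2 + 1)) :=
    mul_nonneg (sub_nonneg.mpr (pow_le_pow_left₀ hr hrR _)) (by positivity)
  simpa using ENNReal.toReal_le_of_le_ofReal hpos hvol

lemma floor_sqrt_div_mem_latticeShell {p : ι → ℝ} (hp : p ∈ stdSimplex ℝ ι) {ε : ℝ} (hε : 0 < ε) :
    (fun i => ⌊√(p i) / ε⌋₊) ∈ latticeShell ι ε⁻¹ := by
  have hb (i : ι) := mem_Icc_sq_floor_sqrt_div_mul (hp.1 i) hε
  have hscale (a : ι → ℝ) : ∑ i, a i ^ 2 = ε⁻¹ ^ 2 * ∑ i, (a i * ε) ^ 2 := by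
    rw [mul_sum]
    exact sum_congr rfl fun i _ => by field_simp
  rw [mem_latticeShell (by positivity), hscale, hscale (fun i => _ + 1)]
  constructor
  · calc ε⁻¹ ^ 2 * ∑ i, ((⌊√(p i) / ε⌋₊ : ℝ) * ε) ^ 2 ≤ ε⁻¹ ^ 2 * ∑ i, p i := by
          gcongr with i
          exact (hb i).1
      _ = ε⁻¹ ^ 2 := by rw [hp.2, mul_one]
  · calc ε⁻¹ ^ 2 = ε⁻¹ ^ 2 * ∑ i, p i := by rw [hp.2, mul_one]
      _ ≤ _ := by
          gcongr with i
          exact (hb i).2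

end

lemma card_latticeShell_le {n : ℕ} (hn : 1 ≤ n) {δ : ℝ} (hδ0 : 0 < δ) (hδ1 : δ ≤ 1) :
    (#(latticeShell (Fin n) (√n / δ)) : ℝ) ≤ √(2 * π * exp 1) ^ n * (1 / δ) ^ (n - 1) := by
  have hn0 : (0 : ℝ) < n := by exact_mod_cast hn
  have hsn : 0 < √(n : ℝ) := sqrt_pos.mpr hn0
  have : Nonempty (Fin n) := ⟨⟨0, hn⟩⟩
  have hcount := card_latticeShell_mul_two_pow_le (ι := Fin n) (M := √n / δ)
    (by simpa using le_div_self hsn.le hδ0 hδ1)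
  simp only [Fintype.card_fin] at hcount
  have hshell : (√n / δ + √n) ^ n - (√n / δ - √n) ^ n ≤ (√n / δ) ^ n * (2 ^ n * δ) := by
    have hplus : √n / δ + √n = √n / δ * (1 + δ) := by field_simp
    have hminus : √n / δ - √n = √n / δ * (1 - δ) := by field_simp
    rw [hplus, hminus, mul_pow, mul_pow, ← mul_sub]
    gcongr
    exact one_add_pow_sub_one_sub_pow_le hδ0.le hδ1 hn
  have hGamma : (√n / √(2 * exp 1)) ^ n ≤ Gamma (n / 2 + 1) := by
    convert half_div_exp_rpow_le_Gamma n hn using 1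
    rw [← sqrt_div' _ (by positivity), sqrt_eq_rpow, ← rpow_natCast, ← rpow_mul (by positivity),
      div_div, one_div_mul_eq_div]
  have hδpow : δ * (1 / δ) ^ n = (1 / δ) ^ (n - 1) := by
    conv_lhs => rw [← Nat.sub_add_cancel hn, pow_succ]
    field_simp
  refine le_of_mul_le_mul_right (hcount.trans ?_) (by positivity : (0 : ℝ) < 2 ^ n)
  calc _ ≤ (√n / δ) ^ n * (2 ^ n * δ) * (√π ^ n / (√n / √(2 * exp 1)) ^ n) := by gcongr
    _ = √(2 * π * exp 1) ^ n * (δ * (1 / δ) ^ n) * 2 ^ n := by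
        rw [show 2 * π * exp 1 = π * (2 * exp 1) by ring, sqrt_mul pi_pos.le, div_pow, div_pow,
          mul_pow, one_div_pow]
        field_simp
    _ = _ := by rw [hδpow]

lemma log_card_latticeShell_le {n : ℕ} (hn : 1 ≤ n) {δ : ℝ} (hδ0 : 0 < δ) (hδ1 : δ ≤ 1) :
    log #(latticeShell (Fin n) (√n / δ)) ≤ (n - 1) * log (1 / δ) + n * log (2 * π * exp 1) / 2 := by
  have h2πe : 1 ≤ 2 * π * exp 1 := by nlinarith [pi_gt_three, add_one_le_exp 1]
  have hbound : 1 ≤ √(2 * π * exp 1) ^ n * (1 / δ) ^ (n - 1) :=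
    one_le_mul_of_one_le_of_one_le (one_le_pow₀ (one_le_sqrt.mpr h2πe))
      (one_le_pow₀ (one_le_one_div hδ0 hδ1))
  calc log #(latticeShell (Fin n) (√n / δ))
      ≤ log (√(2 * π * exp 1) ^ n * (1 / δ) ^ (n - 1)) := by
        rcases Nat.eq_zero_or_pos #(latticeShell (Fin n) (√n / δ)) with h | h
        · simpa [h] using log_nonneg hbound
        · exact log_le_log (by exact_mod_cast h) (card_latticeShell_le hn hδ0 hδ1)
    _ = (n - 1) * log (1 / δ) + n * log (2 * π * exp 1) / 2 := by
        rw [log_mul (by positivity) (by positivity), log_pow, log_pow, log_sqrt (by positivity),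
          Nat.cast_sub hn, Nat.cast_one]
        ring

/-- **Lemma 4: bracketing entropy of the simplex.**
For `0 < δ ≤ 1` the simplex `𝕊_{n-1}` is covered by `N` brackets of
Hellinger diameter at most `δ` with
`ln N ≤ (n-1) ln(1/δ) + (ln 2 + ln(n+1) + n ln(2πe))/2`. -/
theorem bracketing_entropy_simplex (n : ℕ) (hn : 2 ≤ n)
    (δ : ℝ) (hδ0 : 0 < δ) (hδ1 : δ ≤ 1) :
    ∃ (N : ℕ) (lo up : Fin N → Fin n → ℝ),
      (∀ j, hellF (lo j) (up j) ≤ δ) ∧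
      (∀ p ∈ stdSimplex ℝ (Fin n), ∃ j, ∀ i, lo j i ≤ p i ∧ p i ≤ up j i) ∧
      Real.log N ≤ ((n : ℝ) - 1) * Real.log (1 / δ)
        + (Real.log 2 + Real.log ((n : ℝ) + 1)
            + (n : ℝ) * Real.log (2 * Real.pi * Real.exp 1)) / 2 := by
  have hn1 : 1 ≤ n := by omega
  have hsn : 0 < √(n : ℝ) := sqrt_pos.mpr (by positivity)
  set ε := δ / √n with hε
  have hε0 : 0 < ε := by positivity
  set S := latticeShell (Fin n) ε⁻¹
  refine ⟨#S, fun j i => ((S.equivFin.symm j).1 i * ε) ^ 2,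
    fun j i => (((S.equivFin.symm j).1 i + 1) * ε) ^ 2, fun j => ?_, fun p hp => ?_, ?_⟩
  · rw [hellF_sq_natCast_mul_sq_natCast_add_one_mul hε0.le, Fintype.card_fin, hε,
      mul_div_cancel₀ _ hsn.ne']
  · refine ⟨S.equivFin ⟨_, floor_sqrt_div_mem_latticeShell hp hε0⟩, fun i => ?_⟩
    simpa using mem_Icc_sq_floor_sqrt_div_mul (hp.1 i) hε0
  have hlog := log_card_latticeShell_le hn1 hδ0 hδ1
  rw [← inv_div] at hlog
  have : 0 ≤ log 2 + log (n + 1) := add_nonneg (log_nonneg one_le_two) (log_nonneg (by linarith))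
  linarith

end
end

section
/- Let A ≥ 2 and δ > 0. If l, u ∈ [0,∞)^A and α ∈ 𝕊_{A−1} satisfy l ≤ α ≤ u componentwise and (∑_{a=1}^A (√u_a − √l_a)²)^{1/2} ≤ δ, then d_l ≤ d_α ≤ d_u pointwise and the Hellinger distance (with respect to counting measure on the set of unordered pairs) satisfies h(d_l, d_u) ≤ √2·δ·(2+δ). Consequently, if 𝕊_{A−1} is covered by a finite family of N brackets each of Hellinger diameter at most δ, then the set Ω = { d_α : α ∈ 𝕊_{A−1} } of Hardy–Weinberg genotype distributions is covered by a finite family of at most N brackets each of Hellinger diameter at most √2·δ·(2+δ). -/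
/-!
The Hellinger distance is the ℓ² distance between square roots, so it obeys the triangle
inequality. Weighting unordered pairs by `2 - 1_{x¹ = x²}` amounts to summing over ordered pairs,
so `h(d_l, d_u) = h(l ⊗ l, u ⊗ u)`; passing through `l ⊗ u` gives
`h(d_l, d_u) ≤ (‖√l‖ + ‖√u‖) h(l, u)`, where `‖√l‖ ≤ 1` because `l ≤ α`, and
`‖√u‖ ≤ ‖√l‖ + h(l, u) ≤ 1 + δ`. For the covering, a bracket meeting the simplex is first
truncated at `0`, which does not change its Hellinger diameter.
-/

open Real BigOperators

noncomputable section

/-- Auxiliary symmetric function for the Hardy-Weinberg distribution. -/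
def hwAux {A : ℕ} (β : Fin A → ℝ) (a b : Fin A) : ℝ :=
  (2 - if a = b then 1 else 0) * β a * β b

lemma hwAux_symm {A : ℕ} (β : Fin A → ℝ) (a b : Fin A) : hwAux β a b = hwAux β b a := by
  unfold hwAux
  rcases eq_or_ne a b with h | h
  · subst h; ring
  · rw [if_neg h, if_neg h.symm]; ring

/-- The Hardy-Weinberg function `d_β` on unordered pairs,
`d_β({x¹, x²}) = (2 - 1_{x¹=x²}) β_{x¹} β_{x²}`. -/
def hw {A : ℕ} (β : Fin A → ℝ) : Sym2 (Fin A) → ℝ :=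
  Sym2.lift ⟨hwAux β, hwAux_symm β⟩

section Hellinger

variable {𝒳 ι κ : Type*} [Fintype 𝒳] [Fintype ι] [Fintype κ]

lemma hellF_eq_dist (p q : 𝒳 → ℝ) :
    hellF p q = dist (WithLp.toLp 2 fun x => √(p x) : EuclideanSpace ℝ 𝒳)
      (WithLp.toLp 2 fun x => √(q x)) := by
  simp [hellF, EuclideanSpace.dist_eq, Real.dist_eq, sq_abs]

lemma hellF_nonneg (p q : 𝒳 → ℝ) : 0 ≤ hellF p q := Real.sqrt_nonneg _

lemma hellF_comm (p q : 𝒳 → ℝ) : hellF p q = hellF q p := by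
  rw [hellF_eq_dist, hellF_eq_dist, dist_comm]

lemma hellF_triangle (p q r : 𝒳 → ℝ) : hellF p r ≤ hellF p q + hellF q r := by
  simp only [hellF_eq_dist]
  exact dist_triangle _ _ _

lemma hellF_zero_right {p : 𝒳 → ℝ} (hp : 0 ≤ p) : hellF p 0 = √(∑ x, p x) := by
  simp [hellF, Real.sq_sqrt (hp _)]

lemma hellF_mul_left {p : ι → ℝ} (hp : 0 ≤ p) (q r : κ → ℝ) :
    hellF (fun x : ι × κ => p x.1 * q x.2) (fun x => p x.1 * r x.2) = √(∑ i, p i) * hellF q r := by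
  rw [hellF, hellF, ← Real.sqrt_mul (Finset.sum_nonneg fun i _ => hp i), Finset.sum_mul_sum,
    Fintype.sum_prod_type]
  congr 1
  refine Finset.sum_congr rfl fun i _ => Finset.sum_congr rfl fun k _ => ?_
  rw [Real.sqrt_mul (hp i), Real.sqrt_mul (hp i), ← mul_sub, mul_pow, Real.sq_sqrt (hp i)]

lemma hellF_mul_right {r : κ → ℝ} (hr : 0 ≤ r) (p q : ι → ℝ) :
    hellF (fun x : ι × κ => p x.1 * r x.2) (fun x => q x.1 * r x.2) = hellF p q * √(∑ k, r k) := by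
  rw [hellF, hellF, ← Real.sqrt_mul (Finset.sum_nonneg fun i _ => sq_nonneg _), Finset.sum_mul_sum,
    Fintype.sum_prod_type]
  congr 1
  refine Finset.sum_congr rfl fun i _ => Finset.sum_congr rfl fun k _ => ?_
  rw [Real.sqrt_mul' _ (hr k), Real.sqrt_mul' _ (hr k), ← sub_mul, mul_pow, Real.sq_sqrt (hr k)]

lemma hellF_mul_le {p q : ι → ℝ} {p' q' : κ → ℝ} (hp : 0 ≤ p) (hq' : 0 ≤ q') :
    hellF (fun x : ι × κ => p x.1 * p' x.2) (fun x => q x.1 * q' x.2) ≤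
      √(∑ i, p i) * hellF p' q' + hellF p q * √(∑ k, q' k) := by
  calc _ ≤ hellF (fun x : ι × κ => p x.1 * p' x.2) (fun x => p x.1 * q' x.2) +
        hellF (fun x : ι × κ => p x.1 * q' x.2) (fun x => q x.1 * q' x.2) := hellF_triangle _ _ _
    _ = _ := by rw [hellF_mul_left hp, hellF_mul_right hq']

lemma sqrt_sum_le_add_hellF {p q : 𝒳 → ℝ} (hp : 0 ≤ p) (hq : 0 ≤ q) :
    √(∑ x, q x) ≤ √(∑ x, p x) + hellF p q := by
  rw [← hellF_zero_right hp, ← hellF_zero_right hq, add_comm, hellF_comm p]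
  exact hellF_triangle _ _ _

lemma hellF_sup_zero (p q : 𝒳 → ℝ) : hellF (p ⊔ 0) (q ⊔ 0) = hellF p q := by
  have hsqrt (t : ℝ) : √(t ⊔ 0) = √t := by
    rcases le_total 0 t with ht | ht
    · rw [sup_of_le_left ht]
    · rw [sup_of_le_right ht, Real.sqrt_zero, Real.sqrt_eq_zero_of_nonpos ht]
  simp only [hellF, Pi.sup_apply, Pi.zero_apply, hsqrt]

end Hellinger

lemma Sym2.sum_eq_sum_prod {α M : Type*} [Fintype α] [DecidableEq α] [AddCommMonoid M]
    (f : Sym2 α → M) (g : α × α → M)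
    (hfg : ∀ a b, f s(a, b) = if a = b then g (a, b) else g (a, b) + g (b, a)) :
    ∑ z, f z = ∑ x, g x := by
  rw [← Finset.sum_fiberwise Finset.univ (fun x : α × α => s(x.1, x.2)) g]
  refine Finset.sum_congr rfl fun z _ => ?_
  induction z using Sym2.ind with
  | _ a b =>
    rw [hfg]
    split_ifs with hab
    · subst hab
      have hfiber : ({x | s(x.1, x.2) = s(a, a)} : Finset (α × α)) = {(a, a)} := by
        ext ⟨x, y⟩; simp
      rw [hfiber, Finset.sum_singleton]
    · have hfiber : ({x | s(x.1, x.2) = s(a, b)} : Finset (α × α)) = {(a, b), (b, a)} := by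
        ext ⟨x, y⟩; simp
      rw [hfiber, Finset.sum_pair (by simp [hab])]

section HardyWeinberg

variable {A : ℕ}

lemma hw_mk (β : Fin A → ℝ) (a b : Fin A) :
    hw β s(a, b) = (2 - if a = b then 1 else 0) * β a * β b := rfl

lemma hw_mono {β γ : Fin A → ℝ} (hβ : 0 ≤ β) (hβγ : β ≤ γ) : hw β ≤ hw γ := by
  intro z
  induction z using Sym2.ind with
  | _ a b =>
    rw [hw_mk, hw_mk]
    have hc : (0 : ℝ) ≤ 2 - if a = b then 1 else 0 := by split_ifs <;> norm_num
    exact mul_le_mul (mul_le_mul_of_nonneg_left (hβγ a) hc) (hβγ b) (hβ b)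
      (mul_nonneg hc ((hβ a).trans (hβγ a)))

lemma hellF_hw (l u : Fin A → ℝ) :
    hellF (hw l) (hw u) =
      hellF (fun x : Fin A × Fin A => l x.1 * l x.2) (fun x => u x.1 * u x.2) := by
  unfold hellF
  congr 1
  refine Sym2.sum_eq_sum_prod _ _ fun a b => ?_
  have hsqrt (β : Fin A → ℝ) : √(2 * β a * β b) = √2 * √(β a * β b) := by
    rw [mul_assoc, Real.sqrt_mul zero_le_two]
  split_ifs with hab
  · subst hab
    norm_num [hw_mk]
  · simp only [hw_mk, if_neg hab, sub_zero, hsqrt l, hsqrt u]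
    rw [← mul_sub, mul_pow, Real.sq_sqrt zero_le_two, mul_comm (l b), mul_comm (u b)]
    ring

lemma hellF_hw_le {l u : Fin A → ℝ} (hl : 0 ≤ l) (hu : 0 ≤ u) :
    hellF (hw l) (hw u) ≤ (√(∑ a, l a) + √(∑ a, u a)) * hellF l u := by
  rw [hellF_hw, add_mul, mul_comm (√(∑ a, u a))]
  exact hellF_mul_le hl hu

lemma hw_bracket {l u α : Fin A → ℝ} {δ : ℝ} (hl : 0 ≤ l) (hu : 0 ≤ u)
    (hα : α ∈ stdSimplex ℝ (Fin A)) (hlα : l ≤ α) (hαu : α ≤ u) (hδ : hellF u l ≤ δ) :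
    (∀ x, hw l x ≤ hw α x ∧ hw α x ≤ hw u x) ∧ hellF (hw l) (hw u) ≤ √2 * δ * (2 + δ) := by
  refine ⟨fun x => ⟨hw_mono hl hlα x, hw_mono hα.1 hαu x⟩, ?_⟩
  rw [hellF_comm] at hδ
  have hδ0 : 0 ≤ δ := (hellF_nonneg l u).trans hδ
  have hsl : √(∑ a, l a) ≤ 1 := by
    rw [Real.sqrt_le_one, ← hα.2]
    exact Finset.sum_le_sum fun a _ => hlα a
  have hsu : √(∑ a, u a) ≤ 1 + δ := (sqrt_sum_le_add_hellF hl hu).trans (add_le_add hsl hδ)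
  calc hellF (hw l) (hw u) ≤ (√(∑ a, l a) + √(∑ a, u a)) * hellF l u := hellF_hw_le hl hu
    _ ≤ (2 + δ) * δ := mul_le_mul (by linarith) hδ (hellF_nonneg l u) (by linarith)
    _ ≤ √2 * δ * (2 + δ) := by
      nlinarith [Real.one_lt_sqrt_two, mul_nonneg hδ0 (by linarith : (0 : ℝ) ≤ 2 + δ)]

lemma exists_hw_bracket {lo up : Fin A → ℝ} {δ : ℝ} (hδ : hellF lo up ≤ δ) :
    ∃ lo₂ up₂ : Sym2 (Fin A) → ℝ, hellF lo₂ up₂ ≤ √2 * δ * (2 + δ) ∧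
      ∀ α ∈ stdSimplex ℝ (Fin A), (∀ a, lo a ≤ α a ∧ α a ≤ up a) →
        ∀ x, lo₂ x ≤ hw α x ∧ hw α x ≤ up₂ x := by
  by_cases hne : ∃ α ∈ stdSimplex ℝ (Fin A), ∀ a, lo a ≤ α a ∧ α a ≤ up a
  · have hbr (α) (hα : α ∈ stdSimplex ℝ (Fin A)) (hαb : ∀ a, lo a ≤ α a ∧ α a ≤ up a) :=
      hw_bracket le_sup_right le_sup_right hα (sup_le (fun a => (hαb a).1) hα.1)
        (le_sup_of_le_left fun a => (hαb a).2)
        (by rwa [hellF_sup_zero, hellF_comm] : hellF (up ⊔ 0) (lo ⊔ 0) ≤ δ)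
    obtain ⟨α₀, hα₀, hα₀b⟩ := hne
    exact ⟨hw (lo ⊔ 0), hw (up ⊔ 0), (hbr α₀ hα₀ hα₀b).2, fun α hα hαb => (hbr α hα hαb).1⟩
  · have hδ0 : 0 ≤ δ := (hellF_nonneg lo up).trans hδ
    refine ⟨0, 0, ?_, fun α hα hαb => absurd ⟨α, hα, hαb⟩ hne⟩
    rw [hellF_eq_dist, dist_self]
    positivity

end HardyWeinberg

theorem bracket_hardy_weinberg_general (A : ℕ) (δ : ℝ) :
    (∀ l u α : Fin A → ℝ,
      (∀ a, 0 ≤ l a) → (∀ a, 0 ≤ u a) → α ∈ stdSimplex ℝ (Fin A) →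
      (∀ a, l a ≤ α a) → (∀ a, α a ≤ u a) →
      Real.sqrt (∑ a, (Real.sqrt (u a) - Real.sqrt (l a)) ^ 2) ≤ δ →
      (∀ x, hw l x ≤ hw α x ∧ hw α x ≤ hw u x) ∧
        hellF (hw l) (hw u) ≤ Real.sqrt 2 * δ * (2 + δ))
    ∧
    ∀ (N : ℕ) (lo up : Fin N → Fin A → ℝ),
      (∀ j, hellF (lo j) (up j) ≤ δ) →
      (∀ p ∈ stdSimplex ℝ (Fin A), ∃ j, ∀ a, lo j a ≤ p a ∧ p a ≤ up j a) →
      ∃ (N' : ℕ) (_ : N' ≤ N) (lo2 up2 : Fin N' → Sym2 (Fin A) → ℝ),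
        (∀ j, hellF (lo2 j) (up2 j) ≤ Real.sqrt 2 * δ * (2 + δ)) ∧
        ∀ α ∈ stdSimplex ℝ (Fin A), ∃ j, ∀ x, lo2 j x ≤ hw α x ∧ hw α x ≤ up2 j x := by
  refine ⟨fun l u α hl hu hα hlα hαu hδ => hw_bracket hl hu hα hlα hαu hδ, ?_⟩
  intro N lo up hdiam hcover
  choose lo₂ up₂ hdiam₂ hcover₂ using fun j => exists_hw_bracket (hdiam j)
  refine ⟨N, le_rfl, lo₂, up₂, hdiam₂, fun α hα => ?_⟩
  obtain ⟨j, hj⟩ := hcover α hα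
  exact ⟨j, hcover₂ j α hα hj⟩

/-- **Lemma 5: bracketing entropy of Hardy-Weinberg genotype distributions.** -/
theorem bracket_hardy_weinberg (A : ℕ) (hA : 2 ≤ A) (δ : ℝ) (hδ : 0 < δ) :
    (∀ l u α : Fin A → ℝ,
      (∀ a, 0 ≤ l a) → (∀ a, 0 ≤ u a) → α ∈ stdSimplex ℝ (Fin A) →
      (∀ a, l a ≤ α a) → (∀ a, α a ≤ u a) →
      Real.sqrt (∑ a, (Real.sqrt (u a) - Real.sqrt (l a)) ^ 2) ≤ δ →
      (∀ x, hw l x ≤ hw α x ∧ hw α x ≤ hw u x) ∧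
        hellF (hw l) (hw u) ≤ Real.sqrt 2 * δ * (2 + δ))
    ∧
    ∀ (N : ℕ) (lo up : Fin N → Fin A → ℝ),
      (∀ j, hellF (lo j) (up j) ≤ δ) →
      (∀ p ∈ stdSimplex ℝ (Fin A), ∃ j, ∀ a, lo j a ≤ p a ∧ p a ≤ up j a) →
      ∃ (N' : ℕ) (_ : N' ≤ N) (lo2 up2 : Fin N' → Sym2 (Fin A) → ℝ),
        (∀ j, hellF (lo2 j) (up2 j) ≤ Real.sqrt 2 * δ * (2 + δ)) ∧
        ∀ α ∈ stdSimplex ℝ (Fin A), ∃ j, ∀ x, lo2 j x ≤ hw α x ∧ hw α x ≤ up2 j x :=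
  bracket_hardy_weinberg_general A δ

end
end

section
/- Let η : [0,∞) → [0,∞) be convex and nondecreasing with η(0) = 0, and let δ > 0. Then ∑_{j=1}^∞ √j · ( η(2^{1−j}·δ) − η(2^{−j}·δ) ) ≤ 2·η(δ). -/
open Real ENNReal

noncomputable section

/-!
Write `a j = η (2⁻ʲ δ)`. Convexity and `η 0 = 0` give `a j ≤ 2⁻ʲ η δ`. Summation by parts turns
`∑_{j<N} √(j+1) (a j - a (j+1))` into `∑_{j<N} (√(j+1) - √j) a j - √N a N`, and since the
increments of `√` are at most `1` this is at most `∑_{j<N} a j ≤ ∑_j 2⁻ʲ η δ = 2 η δ`.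
-/

theorem ConvexOn.map_mul_le_mul_of_map_zero {f : ℝ → ℝ} (hf : ConvexOn ℝ (Set.Ici 0) f)
    (h0 : f 0 = 0) {x t : ℝ} (hx : 0 ≤ x) (ht₀ : 0 ≤ t) (ht₁ : t ≤ 1) :
    f (t * x) ≤ t * f x := by
  simpa [h0] using hf.2 (Set.mem_Ici.mpr hx) Set.self_mem_Ici ht₀ (sub_nonneg.mpr ht₁)
    (add_sub_cancel t 1)

theorem Real.sqrt_add_one_sub_sqrt_le_one {x : ℝ} (hx : 0 ≤ x) : √(x + 1) - √x ≤ 1 := by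
  have : √(x + 1) ≤ √x + 1 := by
    rw [Real.sqrt_le_iff]
    refine ⟨by positivity, ?_⟩
    nlinarith [Real.sq_sqrt hx, Real.sqrt_nonneg x]
  linarith

namespace Finset

theorem sum_range_mul_sub_succ_add (w a : ℕ → ℝ) (hw : w 0 = 0) (N : ℕ) :
    ∑ j ∈ range N, w (j + 1) * (a j - a (j + 1)) + w N * a N
      = ∑ j ∈ range N, (w (j + 1) - w j) * a j := by
  induction N with
  | zero => simp [hw]
  | succ N ih =>
    rw [sum_range_succ, sum_range_succ, ← ih]
    ring

theorem sum_range_mul_sub_succ_le_sum {w a : ℕ → ℝ} (hw₀ : w 0 = 0) (hw : Monotone w)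
    (hw₁ : ∀ j, w (j + 1) - w j ≤ 1) (ha : ∀ j, 0 ≤ a j) (N : ℕ) :
    ∑ j ∈ range N, w (j + 1) * (a j - a (j + 1)) ≤ ∑ j ∈ range N, a j := by
  have hwN : 0 ≤ w N * a N := mul_nonneg (hw₀ ▸ hw (Nat.zero_le N)) (ha N)
  have hsum : ∑ j ∈ range N, (w (j + 1) - w j) * a j ≤ ∑ j ∈ range N, a j :=
    sum_le_sum fun j _ => mul_le_of_le_one_left (ha j) (hw₁ j)
  linarith [sum_range_mul_sub_succ_add w a hw₀ N]

theorem sum_range_sqrt_mul_sub_succ_le_sum {a : ℕ → ℝ} (ha : ∀ j, 0 ≤ a j) (N : ℕ) :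
    ∑ j ∈ range N, √((j : ℝ) + 1) * (a j - a (j + 1)) ≤ ∑ j ∈ range N, a j := by
  simpa using sum_range_mul_sub_succ_le_sum (w := fun j => √(j : ℝ)) (by simp)
    (fun i j hij => Real.sqrt_le_sqrt (by exact_mod_cast hij))
    (fun j => by simpa using Real.sqrt_add_one_sub_sqrt_le_one j.cast_nonneg) ha N

end Finset

theorem two_rpow_neg_natCast (j : ℕ) : (2 : ℝ) ^ (-(j : ℝ)) = (1 / 2) ^ j := by
  rw [Real.rpow_neg zero_le_two, Real.rpow_natCast, one_div, inv_pow]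

theorem dyadic_sum_bound_general (η : ℝ → ℝ)
    (hconv : ConvexOn ℝ (Set.Ici 0) η)
    (hmono : MonotoneOn η (Set.Ici 0))
    (h0 : η 0 = 0) (δ : ℝ) (hδ : 0 < δ) :
    ∑' j : ℕ, ENNReal.ofReal
        (Real.sqrt ((j : ℝ) + 1) *
          (η ((2 : ℝ) ^ (-(j : ℝ)) * δ) - η ((2 : ℝ) ^ (-(j : ℝ) - 1) * δ)))
      ≤ ENNReal.ofReal (2 * η δ) := by
  set a : ℕ → ℝ := fun j => η ((1 / 2) ^ j * δ)
  have hterm : ∀ j : ℕ, η ((2 : ℝ) ^ (-(j : ℝ)) * δ) - η ((2 : ℝ) ^ (-(j : ℝ) - 1) * δ)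
      = a j - a (j + 1) := fun j => by
    simp only [a, ← two_rpow_neg_natCast, Nat.cast_succ, neg_add']
  have hpos : ∀ j : ℕ, (0 : ℝ) ≤ (1 / 2) ^ j * δ := fun j => by positivity
  have ha_nonneg : ∀ j, 0 ≤ a j := fun j => h0 ▸ hmono Set.self_mem_Ici (hpos j) (hpos j)
  have ha_anti : ∀ j, a (j + 1) ≤ a j := fun j =>
    hmono (hpos _) (hpos j) <| mul_le_mul_of_nonneg_right
      (pow_le_pow_of_le_one (by norm_num) (by norm_num) j.le_succ) hδ.le
  have ha_le : ∀ j, a j ≤ (1 / 2) ^ j * η δ := fun j =>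
    hconv.map_mul_le_mul_of_map_zero h0 hδ.le (by positivity)
      (pow_le_one₀ (by norm_num) (by norm_num))
  have hηδ : 0 ≤ η δ := h0 ▸ hmono Set.self_mem_Ici hδ.le hδ.le
  refine ENNReal.tsum_le_of_sum_range_le fun N => ?_
  simp_rw [hterm]
  rw [← ENNReal.ofReal_sum_of_nonneg fun j _ =>
    mul_nonneg (Real.sqrt_nonneg _) (sub_nonneg.mpr (ha_anti j))]
  refine ENNReal.ofReal_le_ofReal ?_
  calc ∑ j ∈ Finset.range N, √((j : ℝ) + 1) * (a j - a (j + 1))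
      ≤ ∑ j ∈ Finset.range N, a j := Finset.sum_range_sqrt_mul_sub_succ_le_sum ha_nonneg N
    _ ≤ ∑ j ∈ Finset.range N, (1 / 2) ^ j * η δ := Finset.sum_le_sum fun j _ => ha_le j
    _ = (∑ j ∈ Finset.range N, (1 / 2 : ℝ) ^ j) * η δ := (Finset.sum_mul ..).symm
    _ ≤ 2 * η δ := mul_le_mul_of_nonneg_right (sum_geometric_two_le N) hηδ

/-- The dyadic summation bound used in the proof of Proposition 2:
for `η` convex nondecreasing on `[0,∞)` with `η(0) = 0` and `δ > 0`,
`∑_{j≥1} √j (η(2^{1-j} δ) - η(2^{-j} δ)) ≤ 2 η(δ)`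
(the sum, with nonnegative terms, is taken in `ℝ≥0∞`). -/
theorem dyadic_sum_bound (η : ℝ → ℝ)
    (hconv : ConvexOn ℝ (Set.Ici 0) η)
    (hmono : MonotoneOn η (Set.Ici 0))
    (hnn : ∀ x ≥ (0 : ℝ), 0 ≤ η x)
    (h0 : η 0 = 0) (δ : ℝ) (hδ : 0 < δ) :
    ∑' j : ℕ, ENNReal.ofReal
        (Real.sqrt ((j : ℝ) + 1) *
          (η ((2 : ℝ) ^ (-(j : ℝ)) * δ) - η ((2 : ℝ) ^ (-(j : ℝ) - 1) * δ)))
      ≤ ENNReal.ofReal (2 * η δ) :=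
  dyadic_sum_bound_general η hconv hmono h0 δ hδ

end
end

section
/- Let η : [0,∞) → [0,∞) be convex, differentiable and strictly increasing with η(0) = 0, and let b > 1. Then the function f(x) = x·√(b − ln η^{-1}(x)) is nondecreasing on the interval (0, η(1)], where η^{-1} denotes the inverse function of η (note that η^{-1}(x) ≤ 1 for x ≤ η(1), so b − ln η^{-1}(x) ≥ b > 0 on this interval). -/
open Real

noncomputable section

open Set

/-!
Write `t = η⁻¹(x)`, so that `x = η(t)` and
`x √(b - ln η⁻¹(x)) = (η(t) / t) · t √(b - ln t)`.
Both factors are nonnegative and nondecreasing in `t ∈ (0, 1]`: the first is the slope of the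
convex `η` from the origin, the second has derivative `√s - 1/(2√s) ≥ 0` with
`s = b - ln t ≥ b > 1/2`.
Since `η⁻¹` is nondecreasing, so is their product as a function of `x`.
-/

theorem ConvexOn.monotoneOn_div_self {𝕜 : Type*} [Field 𝕜] [LinearOrder 𝕜] [IsStrictOrderedRing 𝕜]
    {f : 𝕜 → 𝕜} (hf : ConvexOn 𝕜 (Ici 0) f) (h0 : f 0 = 0) :
    MonotoneOn (fun x => f x / x) (Ioi 0) := by
  intro x hx y hy hxy
  simpa [h0] using hf.secant_mono self_mem_Ici (mem_Ici.2 (le_of_lt hx))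
    (mem_Ici.2 (le_of_lt hy)) (ne_of_gt hx) (ne_of_gt hy) hxy

theorem StrictMonoOn.monotoneOn_of_rightInvOn {α β : Type*} [LinearOrder α] [Preorder β]
    {f : α → β} {g : β → α} {s : Set α} {t : Set β} (hf : StrictMonoOn f s)
    (hg : MapsTo g t s) (hfg : RightInvOn g f t) : MonotoneOn g t := by
  intro x hx y hy hxy
  rw [← hf.le_iff_le (hg hx) (hg hy), hfg hx, hfg hy]
  exact hxy

theorem hasDerivAt_mul_sqrt_sub_log {b t : ℝ} (ht : 0 < t) (hs : b - log t ≠ 0) :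
    HasDerivAt (fun t => t * √(b - log t)) (√(b - log t) - 1 / (2 * √(b - log t))) t := by
  refine ((hasDerivAt_id' t).fun_mul
    (((hasDerivAt_log ht.ne').const_sub b).sqrt hs)).congr_deriv ?_
  field_simp
  ring

theorem monotoneOn_mul_sqrt_sub_log (b : ℝ) :
    MonotoneOn (fun t => t * √(b - log t)) (Ioc 0 (exp (b - 1 / 2))) := by
  have hs : ∀ t ∈ Ioo 0 (exp (b - 1 / 2)), 1 / 2 < b - log t := fun t ht => by
    have := (log_lt_iff_lt_exp ht.1).2 ht.2
    linarith
  refine monotoneOn_of_hasDerivWithinAt_nonneg (f' := fun t => √(b - log t) - 1 / (2 * √(b - log t)))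
    (convex_Ioc _ _) ?_ (fun t ht => ?_) (fun t ht => ?_)
  · exact continuousOn_id.mul ((continuousOn_const.sub
      (continuousOn_log.mono fun t ht => ne_of_gt ht.1)).sqrt)
  · rw [interior_Ioc] at ht
    exact (hasDerivAt_mul_sqrt_sub_log ht.1 (by linarith [hs t ht])).hasDerivWithinAt
  · rw [interior_Ioc] at ht
    have hpos : 0 < √(b - log t) := sqrt_pos.2 (by linarith [hs t ht])
    rw [sub_nonneg, div_le_iff₀ (by positivity)]
    nlinarith [mul_self_sqrt (by linarith [hs t ht] : 0 ≤ b - log t), hs t ht]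

theorem monotone_x_sqrt_inv_general (η g : ℝ → ℝ)
    (hconv : ConvexOn ℝ (Set.Ici 0) η)
    (hmono : StrictMonoOn η (Set.Ici 0))
    (h0 : η 0 = 0)
    (hg2 : ∀ y ∈ Set.Icc 0 (η 1), g y ∈ Set.Icc (0 : ℝ) 1 ∧ η (g y) = y)
    (b : ℝ) (hb : 1 < b) :
    MonotoneOn (fun x => x * Real.sqrt (b - Real.log (g x))) (Set.Ioc 0 (η 1)) := by
  have hinv : RightInvOn g η (Ioc 0 (η 1)) := fun y hy => (hg2 y (Ioc_subset_Icc_self hy)).2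
  have hmaps : MapsTo g (Ioc 0 (η 1)) (Ioc 0 1) := fun y hy => by
    obtain ⟨⟨hg_nonneg, hg_le⟩, -⟩ := hg2 y (Ioc_subset_Icc_self hy)
    refine ⟨hg_nonneg.lt_of_ne fun h => ?_, hg_le⟩
    have := hinv hy
    rw [← h, h0] at this
    exact hy.1.ne this
  have hg_mono : MonotoneOn g (Ioc 0 (η 1)) :=
    hmono.monotoneOn_of_rightInvOn
      (hmaps.mono_right (Ioc_subset_Icc_self.trans Icc_subset_Ici_self)) hinv
  have hslope := (hconv.monotoneOn_div_self h0).comp hg_mono (hmaps.mono_right Ioc_subset_Ioi_self)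
  have hφ := ((monotoneOn_mul_sqrt_sub_log b).mono
    (Ioc_subset_Ioc_right (one_le_exp (by linarith)))).comp hg_mono hmaps
  refine (hslope.mul hφ (fun x hx => ?_) (fun x hx => ?_)).congr fun x hx => ?_
  · have hgx := (hmaps hx).1
    have := hmono self_mem_Ici (mem_Ici.2 hgx.le) hgx
    rw [h0] at this
    exact div_nonneg this.le hgx.le
  · exact mul_nonneg (hmaps hx).1.le (sqrt_nonneg _)
  · have := (hmaps hx).1.ne'
    simp only [Function.comp_apply, Pi.mul_apply, hinv hx]
    field_simp

/-- The monotonicity statement used in the proof of Proposition 3: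
if `η` is convex, differentiable and strictly increasing on `[0,∞)` with
`η(0) = 0`, `g` is the inverse of `η` (on the relevant intervals), and `b > 1`,
then `x ↦ x √(b - ln η⁻¹(x))` is nondecreasing on `(0, η(1)]`. -/
theorem monotone_x_sqrt_inv (η g : ℝ → ℝ)
    (hconv : ConvexOn ℝ (Set.Ici 0) η)
    (hdiff : DifferentiableOn ℝ η (Set.Ici 0))
    (hmono : StrictMonoOn η (Set.Ici 0))
    (h0 : η 0 = 0)
    (hg1 : ∀ x ∈ Set.Icc (0 : ℝ) 1, g (η x) = x)
    (hg2 : ∀ y ∈ Set.Icc 0 (η 1), g y ∈ Set.Icc (0 : ℝ) 1 ∧ η (g y) = y)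
    (b : ℝ) (hb : 1 < b) :
    MonotoneOn (fun x => x * Real.sqrt (b - Real.log (g x))) (Set.Ioc 0 (η 1)) :=
  monotone_x_sqrt_inv_general η g hconv hmono h0 hg2 b hb

end
end

section
/- Let L ≥ 1 and A_l ≥ 2 for all 1 ≤ l ≤ L. Then ∑_{(K,S) ∈ 𝕄} 2^{−D_{(K,S)}} ≤ (3/4)^L, where the (convergent) sum runs over (K,S) = (1,∅) together with all pairs (K,S) with K ≥ 2 an integer and S a nonempty subset of {1,…,L}. -/
open Real BigOperators ENNReal

noncomputable section

/-- The collection 𝕄 of model indices `(K, S)`. -/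
def Mset (L : ℕ) : Set (ℕ × Finset (Fin L)) :=
  {p | (p.1 = 1 ∧ p.2 = ∅) ∨ (2 ≤ p.1 ∧ p.2.Nonempty)}

/-- Dimension `D_{(K,S)}` of the model `M_{(K,S)}`. -/
def Dks {L : ℕ} (A : Fin L → ℕ) (K : ℕ) (S : Finset (Fin L)) : ℕ :=
  (K - 1) + K * ∑ l ∈ S, (A l - 1) + ∑ l ∈ Sᶜ, (A l - 1)

/-!
Every `A l - 1` is at least `1`, so `D_{(K,S)} ≥ (K - 1) + K·|S| + (L - |S|)`, and on `𝕄`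
(where `K ≥ 2` unless `S = ∅`) this is at least `L + |S| + (K - 1)`.  The weight
`2^{-(K-1)}` sums to `1` over each fibre `{K | (K, S) ∈ 𝕄}` (the single point `K = 1` when
`S = ∅`, a geometric tail otherwise), so the whole sum is at most
`∑_S 2^{-L-|S|} = 2^{-L} (3/2)^L = (3/4)^L`.
-/

lemma card_le_sum_sub_one {ι : Type*} {A : ι → ℕ} (s : Finset ι) (hA : ∀ i ∈ s, 2 ≤ A i) :
    s.card ≤ ∑ i ∈ s, (A i - 1) := by
  simpa using s.card_nsmul_le_sum (fun i => A i - 1) 1 fun i hi => by have := hA i hi; omega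

lemma add_card_add_le_Dks {L : ℕ} {A : Fin L → ℕ} (hA : ∀ l, 2 ≤ A l) {K : ℕ}
    {S : Finset (Fin L)} (hKS : (K, S) ∈ Mset L) : L + S.card + (K - 1) ≤ Dks A K S := by
  have hin := card_le_sum_sub_one S fun l _ => hA l
  have hout := card_le_sum_sub_one Sᶜ fun l _ => hA l
  have hL : S.card + Sᶜ.card = L := by simp [Finset.card_add_card_compl]
  have hK : S.card + ∑ l ∈ S, (A l - 1) ≤ K * ∑ l ∈ S, (A l - 1) := by
    rcases hKS with ⟨rfl, rfl⟩ | ⟨hK, -⟩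
    · simp
    · nlinarith
  unfold Dks
  omega

lemma tsum_ite_two_le_inv_two_pow_sub_one :
    ∑' K : ℕ, (if 2 ≤ K then (2⁻¹ : ℝ≥0∞) ^ (K - 1) else 0) = 1 := by
  rw [← ENNReal.summable.sum_add_tsum_nat_add' (k := 2)]
  simp [Finset.sum_range_succ, ENNReal.tsum_geometric_add_one, ENNReal.inv_mul_cancel]

lemma tsum_indicator_Mset_fibre {L : ℕ} (S : Finset (Fin L)) :
    ∑' K : ℕ, (Mset L).indicator (fun p => (2⁻¹ : ℝ≥0∞) ^ (p.1 - 1)) (K, S) = 1 := by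
  rcases S.eq_empty_or_nonempty with rfl | hS
  · rw [tsum_eq_single 1 fun K hK => Set.indicator_of_notMem (by simp [Mset, hK]) _]
    simp [Mset]
  · rw [← tsum_ite_two_le_inv_two_pow_sub_one]
    congr! 1 with K
    simp [Set.indicator, Mset, hS, hS.ne_empty]

lemma sum_pow_card_eq_add_one_pow {R : Type*} [CommSemiring R] (L : ℕ) (x : R) :
    ∑ S : Finset (Fin L), x ^ S.card = (x + 1) ^ L := by
  simpa using Fin.sum_pow_mul_eq_add_pow x 1

lemma inv_two_mul_inv_two_add_one : (2⁻¹ : ℝ≥0∞) * (2⁻¹ + 1) = 3 / 4 := by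
  rw [← ENNReal.toReal_eq_toReal_iff' (by finiteness) (by finiteness)]
  norm_num [ENNReal.toReal_add, ENNReal.toReal_div]

theorem sum_weights_le_general (L : ℕ) (A : Fin L → ℕ) (hA : ∀ l, 2 ≤ A l) :
    ∑' m : {p : ℕ × Finset (Fin L) // p ∈ Mset L},
        ((2 : ℝ≥0∞))⁻¹ ^ (Dks A m.val.1 m.val.2)
      ≤ ((3 : ℝ≥0∞) / 4) ^ L := by
  set w : ℕ × Finset (Fin L) → ℝ≥0∞ := fun p => 2⁻¹ ^ (L + p.2.card) * 2⁻¹ ^ (p.1 - 1)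
  calc ∑' m : {p : ℕ × Finset (Fin L) // p ∈ Mset L}, (2 : ℝ≥0∞)⁻¹ ^ Dks A m.val.1 m.val.2
      ≤ ∑' m : {p : ℕ × Finset (Fin L) // p ∈ Mset L}, w m := by
        refine ENNReal.tsum_le_tsum fun m => ?_
        simp only [w, ← pow_add]
        exact pow_le_pow_right_of_le_one' (ENNReal.inv_le_one.mpr one_le_two)
          (add_card_add_le_Dks hA m.2)
    _ = ∑' S : Finset (Fin L), ∑' K : ℕ, (Mset L).indicator w (K, S) := by
        rw [tsum_subtype, ENNReal.tsum_prod', ENNReal.tsum_comm]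
    _ = ∑ S : Finset (Fin L), 2⁻¹ ^ L * 2⁻¹ ^ S.card := by
        simp only [w, tsum_fintype, Set.indicator_mul_right, ENNReal.tsum_mul_left,
          tsum_indicator_Mset_fibre, mul_one, pow_add]
    _ = (3 / 4) ^ L := by
        rw [← Finset.mul_sum, sum_pow_card_eq_add_one_pow, ← mul_pow,
          inv_two_mul_inv_two_add_one]

/-- **Lemma 8: the weights are summable.**
`∑_{(K,S) ∈ 𝕄} 2^{-D_{(K,S)}} ≤ (3/4)^L` (sum taken in `ℝ≥0∞`). -/
theorem sum_weights_le (L : ℕ) (hL : 1 ≤ L) (A : Fin L → ℕ) (hA : ∀ l, 2 ≤ A l) :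
    ∑' m : {p : ℕ × Finset (Fin L) // p ∈ Mset L},
        ((2 : ℝ≥0∞))⁻¹ ^ (Dks A m.val.1 m.val.2)
      ≤ ((3 : ℝ≥0∞) / 4) ^ L :=
  sum_weights_le_general L A hA

end
end
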